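/- arXiv:1203.2363 — 4 statements merged into one kernel-verified Lean document; each statement's English description precedes it below -/
import Mathlib

section
/- The number of integers n ≤ x of the form n = p₁^{α₁}⋯p_r^{α_r} with primes p_i (not necessarily distinct) is O(x^{1/α₁} (log log x)^{r-1} / log x), where α₁ ≤ α₂ ≤ ⋯ ≤ α_r are positive integers. -/
/-!
Write `α = β 0`. If `n = ∏ pᵢ ^ βᵢ ≤ x`, then `(∏ pᵢ) ^ α ≤ n`, so `n` is the image of a tuple
of `r + 1` primes whose product is at most `X = x ^ (1 / α)`, and it suffices to bound the number
of such tuples by Landau's `X (log log X) ^ r / log X`. Fix the position of the largest prime `q`;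
the other primes have a product `m` with `q m ≤ X` and `m ≤ q ^ r`, so `X ≤ (X / m) ^ (r + 1)`
and Chebyshev's bound leaves `O((r + 1) X / (m log X))` choices of `q`. Summing `1 / m` over the
remaining tuples gives `(∑_{p ≤ X} 1 / p) ^ r`, and `∑_{p ≤ X} 1 / p = O(log log X)` follows
from Chebyshev's bound by a dyadic induction.
-/

open Filter Asymptotics Real

/-- The set of integers expressible as `p₁^{β 0} ⋯ p_r^{β (r-1)}` for primes `pᵢ`
(repetitions allowed). -/
def Psigma {r : ℕ} (β : Fin r → ℕ) : Set ℕ :=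
  {n | ∃ p : Fin r → ℕ, (∀ i, (p i).Prime) ∧ n = ∏ i, p i ^ β i}

/-- The set of integers expressible as `p₁^{β 0} ⋯ p_r^{β (r-1)}` for pairwise distinct
primes `pᵢ`. -/
def Ppi {r : ℕ} (β : Fin r → ℕ) : Set ℕ :=
  {n | ∃ p : Fin r → ℕ, (∀ i, (p i).Prime) ∧ Function.Injective p ∧ n = ∏ i, p i ^ β i}

/-- The number of `n ∈ S` with `n ≤ x`. -/
noncomputable def countIn (S : Set ℕ) (x : ℝ) : ℕ :=
  Nat.card {n : ℕ | (n : ℝ) ≤ x ∧ n ∈ S}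

open Finset
open Nat (primesLE mem_primesLE)

lemma card_primesLE_floor_mul_log_le {x : ℝ} (hx : 0 ≤ x) :
    (#(primesLE ⌊x⌋₊) : ℝ) * log x ≤ 5 * x := by
  rcases le_or_gt x 1 with hx1 | hx1
  · have : primesLE ⌊x⌋₊ = ∅ :=
      subset_empty.1 (Nat.primesLE_one ▸ Nat.primesLE_mono (Nat.floor_le_one_of_le_one hx1))
    simp [this, hx]
  have hpi := Chebyshev.pi_le_log4_mul_div hx1
  rw [← Nat.primesLE_card_eq_primeCounting] at hpi
  have hlog_sqrt_pos : 0 < log √x := log_pos (lt_sqrt_of_sq_lt (by simpa using hx1))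
  have hlog_sqrt_le : log √x ≤ √x := (log_le_sub_one_of_pos (by positivity)).trans (by linarith)
  have hlog4 : log 4 < 1.4 := by
    rw [show (4 : ℝ) = 2 ^ 2 by norm_num, log_pow]
    linarith [log_two_lt_d9]
  calc (#(primesLE ⌊x⌋₊) : ℝ) * log x = 2 * (#(primesLE ⌊x⌋₊) * log √x) := by
        rw [log_sqrt hx]; ring
    _ ≤ 2 * ((log 4 * x / log √x + √x) * log √x) := by gcongr
    _ = 2 * log 4 * x + 2 * (√x * log √x) := by field_simp
    _ ≤ 2 * 1.4 * x + 2 * (√x * √x) := by gcongr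
    _ ≤ 5 * x := by rw [mul_self_sqrt hx]; linarith

lemma sum_inv_primesLE_le_half_add (y : ℕ) (hy : 2 ≤ y) :
    ∑ p ∈ primesLE y, (p : ℝ)⁻¹ ≤ ∑ p ∈ primesLE (y / 2), (p : ℝ)⁻¹ + 10 / log y := by
  have hlog : 0 < log y := log_pos (by exact_mod_cast hy)
  have hhead : {p ∈ primesLE y | p ≤ y / 2} = primesLE (y / 2) := by
    ext p
    simp only [mem_filter, mem_primesLE]
    exact ⟨fun ⟨⟨_, hp⟩, h⟩ ↦ ⟨h, hp⟩, fun ⟨h, hp⟩ ↦ ⟨⟨by omega, hp⟩, h⟩⟩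
  have htail : ∑ p ∈ primesLE y with ¬p ≤ y / 2, (p : ℝ)⁻¹ ≤ #(primesLE y) * (2 / y) := by
    refine (sum_le_card_nsmul _ _ (2 / (y : ℝ)) fun p hp ↦ ?_).trans ?_
    · rw [mem_filter] at hp
      rw [inv_le_comm₀ (by exact_mod_cast (Nat.prime_of_mem_primesLE hp.1).pos) (by positivity),
        inv_div, div_le_iff₀ two_pos]
      exact_mod_cast (by omega : y ≤ p * 2)
    · rw [nsmul_eq_mul]; gcongr; exact filter_subset _ _
  have hcheb := card_primesLE_floor_mul_log_le (Nat.cast_nonneg y)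
  rw [Nat.floor_natCast] at hcheb
  rw [← sum_filter_add_sum_filter_not _ (· ≤ y / 2), hhead]
  gcongr
  refine htail.trans ?_
  rw [le_div_iff₀ hlog]
  calc (#(primesLE y) : ℝ) * (2 / y) * log y = (#(primesLE y) * log y) * 2 / y := by ring
    _ ≤ 5 * y * 2 / y := by gcongr
    _ = 10 := by field_simp; norm_num

lemma log_two_div_log_le_log_log_sub {a b : ℝ} (hb : 1 < b) (hab : 2 * b ≤ a) :
    log 2 / log a ≤ log (log a) - log (log b) := by
  have hlogb : 0 < log b := log_pos hb
  have hloga : 0 < log a := log_pos (by linarith)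
  have hgap : log 2 ≤ log a - log b := by
    linarith [log_le_log (by positivity) hab, log_mul two_ne_zero (show b ≠ 0 by positivity)]
  have hquot := log_le_sub_one_of_pos (div_pos hlogb hloga)
  rw [log_div hlogb.ne' hloga.ne'] at hquot
  have : log 2 / log a ≤ (log a - log b) / log a := by gcongr
  have : (log a - log b) / log a = 1 - log b / log a := by field_simp
  linarith

lemma one_le_log_log {t : ℝ} (ht : 16 ≤ t) : 1 ≤ log (log t) := by
  have h16 : log 16 = 4 * log 2 := by
    rw [show (16 : ℝ) = 2 ^ 4 by norm_num, log_pow]; norm_num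
  have : exp 1 ≤ log t := by
    linarith [log_le_log (by norm_num) ht, log_two_gt_d9, exp_one_lt_d9]
  simpa using log_le_log (exp_pos 1) this

theorem sum_inv_primesLE_le_log_log (y : ℕ) (hy : 16 ≤ y) :
    ∑ p ∈ primesLE y, (p : ℝ)⁻¹ ≤ 40 * log (log y) := by
  induction y using Nat.strong_induction_on with
  | _ y ih =>
  have hloglog : 1 ≤ log (log y) := one_le_log_log (by exact_mod_cast hy)
  rcases lt_or_ge y 32 with hy32 | hy32
  · have hcard : #(primesLE y) ≤ y + 1 := (card_filter_le _ _).trans (card_range _).le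
    calc ∑ p ∈ primesLE y, (p : ℝ)⁻¹ ≤ #(primesLE y) • (1 : ℝ) :=
          sum_le_card_nsmul _ _ _ fun p hp ↦
            inv_le_one_of_one_le₀ (by exact_mod_cast (Nat.prime_of_mem_primesLE hp).one_le)
      _ ≤ 40 * log (log y) := by
          rw [nsmul_eq_mul, mul_one]
          have : (#(primesLE y) : ℝ) ≤ 32 := by exact_mod_cast (by omega : #(primesLE y) ≤ 32)
          linarith
  have hgap := log_two_div_log_le_log_log_sub (b := (y / 2 : ℕ)) (a := y)
    (by exact_mod_cast (by omega : 1 < y / 2)) (by exact_mod_cast (by omega : 2 * (y / 2) ≤ y))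
  have hlog : 0 < log y := log_pos (by exact_mod_cast (by omega : 1 < y))
  have h10 : 10 / log y ≤ 40 * (log 2 / log y) := by
    rw [mul_div_assoc', div_le_div_iff_of_pos_right hlog]; linarith [log_two_gt_d9]
  linarith [sum_inv_primesLE_le_half_add y (by omega), ih (y / 2) (by omega) (by omega)]

def primeTuplesLE (k y : ℕ) : Finset (Fin k → ℕ) :=
  {p ∈ Fintype.piFinset fun _ ↦ primesLE y | ∏ i, p i ≤ y}

lemma mem_primeTuplesLE {k y : ℕ} {p : Fin k → ℕ} :
    p ∈ primeTuplesLE k y ↔ (∀ i, (p i).Prime) ∧ ∏ i, p i ≤ y := by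
  simp only [primeTuplesLE, mem_filter, Fintype.mem_piFinset, mem_primesLE]
  refine ⟨fun h ↦ ⟨fun i ↦ (h.1 i).2, h.2⟩, fun h ↦ ⟨fun i ↦ ⟨?_, h.1 i⟩, h.2⟩⟩
  exact (single_le_prod' (fun j _ ↦ (h.1 j).one_le) (mem_univ i)).trans h.2

lemma sum_primeTuplesLE_prod_inv_le (k y : ℕ) :
    ∑ p ∈ primeTuplesLE k y, ∏ i, (p i : ℝ)⁻¹ ≤ (∑ q ∈ primesLE y, (q : ℝ)⁻¹) ^ k := by
  rw [← Fin.prod_const, prod_univ_sum]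
  exact sum_le_sum_of_subset_of_nonneg (filter_subset _ _) fun _ _ _ ↦ by positivity

lemma card_primes_mul_log_le {Q : Finset ℕ} {k y n : ℕ} (hn : 0 < n)
    (hQ : ∀ q ∈ Q, q.Prime ∧ q * n ≤ y ∧ n ≤ q ^ k) :
    (#Q : ℝ) * log y ≤ 5 * (k + 1) * y / n := by
  rcases Q.eq_empty_or_nonempty with rfl | ⟨q, hq⟩
  · simp only [card_empty, Nat.cast_zero, zero_mul]; positivity
  set t : ℝ := y / n
  have hn' : (0 : ℝ) < n := by exact_mod_cast hn
  have hle_t {q : ℕ} (hqy : q * n ≤ y) : (q : ℝ) ≤ t := by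
    rw [le_div_iff₀ hn']; exact_mod_cast hqy
  obtain ⟨hq, hqy, hnq⟩ := hQ q hq
  have ht : 1 ≤ t := le_trans (by exact_mod_cast hq.one_le) (hle_t hqy)
  have hQsub : Q ⊆ primesLE ⌊t⌋₊ := fun q' hq' ↦
    mem_primesLE.2 ⟨Nat.le_floor (hle_t (hQ q' hq').2.1), (hQ q' hq').1⟩
  have hy : (y : ℝ) ≤ t ^ (k + 1) := calc
    (y : ℝ) = n * t := (mul_div_cancel₀ _ hn'.ne').symm
    _ ≤ t ^ k * t := by
        gcongr
        exact (by exact_mod_cast hnq : (n : ℝ) ≤ q ^ k).trans (by gcongr; exact hle_t hqy)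
    _ = t ^ (k + 1) := (pow_succ t k).symm
  have hlog : log y ≤ (k + 1) * log t := by
    have hy0 : (0 : ℝ) < y := by exact_mod_cast (Nat.mul_pos hq.pos hn).trans_le hqy
    exact_mod_cast (log_le_log hy0 hy).trans_eq (log_pow _ _)
  calc (#Q : ℝ) * log y ≤ #(primesLE ⌊t⌋₊) * ((k + 1) * log t) := by
        gcongr
    _ = (k + 1) * (#(primesLE ⌊t⌋₊) * log t) := by ring
    _ ≤ (k + 1) * (5 * t) :=
        mul_le_mul_of_nonneg_left (card_primesLE_floor_mul_log_le (by positivity)) (by positivity)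
    _ = 5 * (k + 1) * y / n := by ring

def maxPrimeExtensions (y : ℕ) {k : ℕ} (rest : Fin k → ℕ) : Finset ℕ :=
  {q ∈ primesLE y | q * ∏ i, rest i ≤ y ∧ ∀ i, rest i ≤ q}

lemma card_maxPrimeExtensions_mul_log_le {k y : ℕ} {rest : Fin k → ℕ}
    (hrest : ∀ i, (rest i).Prime) :
    (#(maxPrimeExtensions y rest) : ℝ) * log y ≤ 5 * (k + 1) * y * ∏ i, (rest i : ℝ)⁻¹ := by
  rw [prod_inv_distrib, ← div_eq_mul_inv, ← Nat.cast_prod]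
  refine card_primes_mul_log_le (prod_pos fun i _ ↦ (hrest i).pos) fun q hq ↦ ?_
  obtain ⟨hq, hqy, hmax⟩ := mem_filter.1 hq
  refine ⟨Nat.prime_of_mem_primesLE hq, hqy, ?_⟩
  simpa using prod_le_pow_card univ rest q fun i _ ↦ hmax i

lemma card_primeTuplesLE_succ_le (k y : ℕ) :
    #(primeTuplesLE (k + 1) y) ≤
      (k + 1) * ∑ rest ∈ primeTuplesLE k y, #(maxPrimeExtensions y rest) := by
  have hcover : primeTuplesLE (k + 1) y ⊆ (univ : Finset (Fin (k + 1))).biUnion fun j ↦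
      (primeTuplesLE k y).biUnion fun rest ↦
        (maxPrimeExtensions y rest).image fun q ↦ Fin.insertNth j q rest := by
    intro p hp
    obtain ⟨hprime, hprod⟩ := mem_primeTuplesLE.1 hp
    obtain ⟨j, -, hj⟩ := exists_max_image univ p univ_nonempty
    have hsplit : ∏ i, p i = p j * ∏ i, Fin.removeNth j p i := Fin.prod_univ_succAbove p j
    simp only [mem_biUnion, mem_image, mem_univ, true_and]
    refine ⟨j, Fin.removeNth j p, mem_primeTuplesLE.2 ⟨fun i ↦ hprime _, ?_⟩, p j,
      mem_filter.2 ⟨mem_primesLE.2 ⟨?_, hprime j⟩, hsplit ▸ hprod, fun i ↦ hj _ (mem_univ _)⟩,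
      Fin.insertNth_self_removeNth j p⟩
    · exact (Nat.le_mul_of_pos_left _ (hprime j).pos).trans (hsplit ▸ hprod)
    · exact (Nat.le_mul_of_pos_right _ (prod_pos fun i _ ↦ (hprime _).pos)).trans (hsplit ▸ hprod)
  calc #(primeTuplesLE (k + 1) y)
      ≤ ∑ j : Fin (k + 1), ∑ rest ∈ primeTuplesLE k y, #(maxPrimeExtensions y rest) := by
        refine (card_le_card hcover).trans (card_biUnion_le.trans (sum_le_sum fun j _ ↦ ?_))
        exact card_biUnion_le.trans (sum_le_sum fun rest _ ↦ card_image_le)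
    _ = (k + 1) * ∑ rest ∈ primeTuplesLE k y, #(maxPrimeExtensions y rest) := by simp

theorem card_primeTuplesLE_succ_mul_log_le (k y : ℕ) :
    (#(primeTuplesLE (k + 1) y) : ℝ) * log y ≤
      5 * (k + 1) ^ 2 * y * (∑ q ∈ primesLE y, (q : ℝ)⁻¹) ^ k := by
  calc (#(primeTuplesLE (k + 1) y) : ℝ) * log y
      ≤ (k + 1) * ∑ rest ∈ primeTuplesLE k y, (#(maxPrimeExtensions y rest) : ℝ) * log y := by
        rw [← sum_mul, ← mul_assoc]
        gcongr
        exact_mod_cast card_primeTuplesLE_succ_le k y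
    _ ≤ (k + 1) * ∑ rest ∈ primeTuplesLE k y, 5 * (k + 1) * y * ∏ i, (rest i : ℝ)⁻¹ := by
        gcongr (k + 1 : ℝ) * ?_
        exact sum_le_sum fun rest hrest ↦
          card_maxPrimeExtensions_mul_log_le (mem_primeTuplesLE.1 hrest).1
    _ = 5 * (k + 1) ^ 2 * y * ∑ rest ∈ primeTuplesLE k y, ∏ i, (rest i : ℝ)⁻¹ := by
        rw [← mul_sum]; ring
    _ ≤ 5 * (k + 1) ^ 2 * y * (∑ q ∈ primesLE y, (q : ℝ)⁻¹) ^ k := by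
        gcongr; exact sum_primeTuplesLE_prod_inv_le k y

lemma countIn_Psigma_le {k a : ℕ} (β : Fin k → ℕ) (ha : 0 < a) (hβ : ∀ i, a ≤ β i) (x : ℝ) :
    countIn (Psigma β) x ≤ #(primeTuplesLE k ⌊x ^ ((1 : ℝ) / a)⌋₊) := by
  set X := ⌊x ^ ((1 : ℝ) / a)⌋₊
  have hsub : {n : ℕ | (n : ℝ) ≤ x ∧ n ∈ Psigma β} ⊆
      ((primeTuplesLE k X).image fun p ↦ ∏ i, p i ^ β i : Finset ℕ) := by
    rintro n ⟨hnx, p, hp, rfl⟩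
    refine mem_image.2 ⟨p, mem_primeTuplesLE.2 ⟨hp, Nat.le_floor ?_⟩, rfl⟩
    have hpow : (∏ i, p i) ^ a ≤ ∏ i, p i ^ β i := by
      rw [← prod_pow]
      exact prod_le_prod' fun i _ ↦ Nat.pow_le_pow_right (hp i).pos (hβ i)
    rw [one_div, le_rpow_inv_iff_of_pos (by positivity) ((Nat.cast_nonneg _).trans hnx)
      (by exact_mod_cast ha), rpow_natCast]
    exact le_trans (by exact_mod_cast hpow) hnx
  rw [countIn, Nat.card_coe_set_eq]
  exact (Set.ncard_le_ncard hsub).trans ((Set.ncard_coe_finset _).trans_le card_image_le)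

theorem card_primeTuplesLE_floor_isBigO (k : ℕ) :
    (fun y : ℝ ↦ (#(primeTuplesLE (k + 1) ⌊y⌋₊) : ℝ)) =O[atTop]
      fun y ↦ y * log (log y) ^ k / log y := by
  refine isBigO_iff.2 ⟨10 * (k + 1) ^ 2 * 40 ^ k, ?_⟩
  filter_upwards [eventually_ge_atTop 16] with y hy
  set X := ⌊y⌋₊
  have hX : 16 ≤ X := Nat.le_floor (by exact_mod_cast hy)
  have hX' : (16 : ℝ) ≤ X := by exact_mod_cast hX
  have hXy : (X : ℝ) ≤ y := Nat.floor_le (by linarith)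
  have hlogX : 0 < log X := log_pos (by linarith)
  have hlogy : log y ≤ 2 * log X := by
    have : log y ≤ log ((X : ℝ) ^ 2) :=
      log_le_log (by linarith) (by nlinarith [Nat.lt_floor_add_one y])
    rwa [log_pow, Nat.cast_ofNat] at this
  have hloglog : log (log X) ≤ log (log y) := log_le_log hlogX (log_le_log (by linarith) hXy)
  have hS := sum_inv_primesLE_le_log_log X hX
  have hL := one_le_log_log hy
  have hlogy_pos : 0 < log y := log_pos (by linarith)
  rw [norm_of_nonneg (by positivity),
    norm_of_nonneg (div_nonneg (by have := pow_nonneg (zero_le_one.trans hL) k; positivity)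
      hlogy_pos.le), mul_div_assoc', le_div_iff₀ hlogy_pos]
  calc (#(primeTuplesLE (k + 1) X) : ℝ) * log y
      ≤ 2 * (#(primeTuplesLE (k + 1) X) * log X) := by nlinarith
    _ ≤ 2 * (5 * (k + 1) ^ 2 * X * (∑ q ∈ primesLE X, (q : ℝ)⁻¹) ^ k) := by
        gcongr 2 * ?_; exact card_primeTuplesLE_succ_mul_log_le k X
    _ ≤ 2 * (5 * (k + 1) ^ 2 * y * (40 * log (log y)) ^ k) := by
        gcongr; linarith
    _ = 10 * (k + 1) ^ 2 * 40 ^ k * (y * log (log y) ^ k) := by ring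

lemma isBigO_rpow_mul_log_log_pow_div_log_rpow {c : ℝ} (hc0 : 0 < c) (hc1 : c ≤ 1) (k : ℕ) :
    (fun x : ℝ ↦ x ^ c * log (log (x ^ c)) ^ k / log (x ^ c)) =O[atTop]
      fun x ↦ x ^ c * log (log x) ^ k / log x := by
  refine isBigO_iff.2 ⟨c⁻¹, ?_⟩
  filter_upwards [(tendsto_rpow_atTop hc0).eventually_ge_atTop 3, eventually_ge_atTop 1]
    with x hxc hx
  have hlogxc : 1 ≤ log (x ^ c) := by
    rw [le_log_iff_exp_le (by linarith)]; linarith [exp_one_lt_d9]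
  have hlog_eq : log (x ^ c) = c * log x := log_rpow (by linarith) c
  have hlogx : 0 < log x := pos_of_mul_pos_right (hlog_eq ▸ hlogxc.trans_lt' one_pos) hc0.le
  have hloglog : log (log (x ^ c)) ≤ log (log x) := by
    refine log_le_log (by linarith) ?_
    rw [hlog_eq]; nlinarith
  have hLc : 0 ≤ log (log (x ^ c)) := log_nonneg hlogxc
  have hL : 0 ≤ log (log x) := hLc.trans hloglog
  rw [norm_of_nonneg (by positivity), norm_of_nonneg (by positivity)]
  calc x ^ c * log (log (x ^ c)) ^ k / log (x ^ c) ≤ x ^ c * log (log x) ^ k / log (x ^ c) := by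
        gcongr
    _ = c⁻¹ * (x ^ c * log (log x) ^ k / log x) := by rw [hlog_eq]; field_simp

/-- `σ_β(x) = O(x^{1/α₁} (log log x)^{r-1} / log x)` for
`β = (α₁,…,α_r)` with `0 < α₁ ≤ ⋯ ≤ α_r`. -/
theorem sigma_beta_upper_bound (r : ℕ) (β : Fin (r + 1) → ℕ)
    (hpos : ∀ i, 0 < β i) (hmono : Monotone β) :
    (fun x : ℝ => (countIn (Psigma β) x : ℝ)) =O[atTop]
      (fun x : ℝ =>
        x ^ ((1 : ℝ) / (β 0 : ℝ)) * Real.log (Real.log x) ^ r / Real.log x) := by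
  have hc0 : (0 : ℝ) < 1 / (β 0 : ℝ) := by have := hpos 0; positivity
  have hc1 : 1 / (β 0 : ℝ) ≤ 1 := by
    rw [div_le_one (by exact_mod_cast hpos 0)]; exact_mod_cast hpos 0
  have hcount : (fun x : ℝ ↦ (countIn (Psigma β) x : ℝ)) =O[atTop]
      fun x ↦ (#(primeTuplesLE (r + 1) ⌊x ^ ((1 : ℝ) / β 0)⌋₊) : ℝ) :=
    isBigO_of_le _ fun x ↦ by
      simpa using countIn_Psigma_le β (hpos 0) (fun i ↦ hmono (Fin.zero_le i)) x
  exact hcount.trans <| ((card_primeTuplesLE_floor_isBigO r).comp_tendsto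
    (tendsto_rpow_atTop hc0)).trans (isBigO_rpow_mul_log_log_pow_div_log_rpow hc0 hc1 r)
end

section
/- If α, α₁, …, α_r are positive integers with α < α_i for all i, then the series ∑ n^{-1/α}, taken over all integers n expressible as n = p₁^{α₁}⋯p_r^{α_r} with primes p_i, converges. -/
open Filter Asymptotics Real

lemma summable_pi_prod : ∀ (r : ℕ) (g : Fin r → ℕ → ℝ),
    (∀ i, Summable (g i)) → (∀ i k, 0 ≤ g i k) →
    Summable (fun p : Fin r → ℕ => ∏ i, g i (p i)) := by
  intro r
  induction r with
  | zero => intro g _ _; exact Summable.of_finite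
  | succ n ih =>
    intro g hs hnn
    have h1 : Summable (fun p : Fin n → ℕ => ∏ i : Fin n, g i.succ (p i)) :=
      ih (fun i => g i.succ) (fun i => hs i.succ) (fun i k => hnn i.succ k)
    have key : Summable (fun q : ℕ × (Fin n → ℕ) =>
        g 0 q.1 * ∏ i : Fin n, g i.succ (q.2 i)) :=
      Summable.mul_of_nonneg (f := g 0)
        (g := fun p : Fin n → ℕ => ∏ i : Fin n, g i.succ (p i)) (hs 0) h1
        (fun k => hnn 0 k) (fun q => Finset.prod_nonneg fun i _ => hnn i.succ (q i))
    have := (Equiv.summable_iff (Fin.consEquiv (fun _ : Fin (n+1) => ℕ)).symm).2 key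
    refine this.congr fun p => ?_
    simp [Fin.consEquiv, Fin.prod_univ_succ, Fin.tail]

/-- if `α < αᵢ` for all `i`, then `∑_{n ∈ 𝒫_β^σ} n^{-1/α}` converges. -/
theorem summable_over_Psigma (r α : ℕ) (β : Fin r → ℕ) (hα : 0 < α)
    (h : ∀ i, α < β i) :
    Summable (fun n : Psigma β => ((n : ℕ) : ℝ) ^ (-(1 : ℝ) / (α : ℝ))) := by
  classical
  set g : Fin r → ℕ → ℝ := fun i k => (k : ℝ) ^ (-(β i : ℝ) / (α : ℝ)) with hg
  have hαpos : (0 : ℝ) < α := by exact_mod_cast hα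
  have hsum : ∀ i, Summable (g i) := by
    intro i
    apply Real.summable_nat_rpow.2
    rw [neg_div, neg_lt_neg_iff, lt_div_iff₀ hαpos]
    linarith [show (α : ℝ) < (β i : ℝ) by exact_mod_cast h i]
  have hnn : ∀ i k, 0 ≤ g i k := fun i k => Real.rpow_nonneg (Nat.cast_nonneg k) _
  have hG := summable_pi_prod r g hsum hnn
  set m : Psigma β → (Fin r → ℕ) := fun s => Classical.choose s.2 with hm
  have hmspec : ∀ s : Psigma β, (∀ i, (m s i).Prime) ∧ (s : ℕ) = ∏ i, m s i ^ β i :=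
    fun s => Classical.choose_spec s.2
  have hminj : Function.Injective m := by
    intro s t hst
    have hs := (hmspec s).2
    have ht := (hmspec t).2
    apply Subtype.ext
    rw [hs, ht, hst]
  have hcomp := hG.comp_injective hminj
  refine hcomp.congr fun s => ?_
  show ∏ i, g i (m s i) = ((s : ℕ) : ℝ) ^ (-(1 : ℝ) / (α : ℝ))
  rw [(hmspec s).2]
  push_cast
  rw [← Real.finset_prod_rpow _ _ (fun i _ => by positivity)]
  refine Finset.prod_congr rfl fun i _ => ?_
  have hexp : (β i : ℝ) * (-1 / (α : ℝ)) = -(β i : ℝ) / (α : ℝ) := by ring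
  rw [hg, ← Real.rpow_natCast ((m s i : ℝ)) (β i), ← Real.rpow_mul (Nat.cast_nonneg _), hexp]
end

section
/- Let α < α₁ ≤ ⋯ ≤ α_r be positive integers and β = (α₁,…,α_r). For C = 2αα₁ + 1, the tail ∑_{m > (log x)^C, m ∈ 𝒫_β^σ} m^{-1/α} is O(1/(log x)²) as x → ∞. -/
/-!
With `C = 2αα₁ + 1` and `s = 1/α - 2/C`, every term of the tail satisfies
`m ^ (-1/α) = m ^ (-s) * m ^ (-2/C) ≤ m ^ (-s) / (log x) ^ 2`, so the tail is at most
`(∑_{m ∈ 𝒫_β^σ} m ^ (-s)) / (log x) ^ 2`. That series converges: it is dominated by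
`∏ᵢ ∑_p p ^ (-βᵢ s)`, and each `βᵢ s > 1` because `βᵢ ≥ α + 1` and `C > 2α(α + 1)`.
-/

open Filter Asymptotics Real

theorem summable_fin_pi_prod {ι : Type*} {n : ℕ} (f : Fin n → ι → ℝ)
    (hf : ∀ i a, 0 ≤ f i a) (hs : ∀ i, Summable (f i)) :
    Summable fun p : Fin n → ι => ∏ i, f i (p i) := by
  induction n with
  | zero => simpa using summable_of_hasFiniteSupport (Set.toFinite _)
  | succ n ih =>
    have htail : Summable fun q : Fin n → ι => ∏ i, f i.succ (q i) :=
      ih (fun i => f i.succ) (fun i => hf i.succ) fun i => hs i.succ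
    have hhead_tail : Summable fun x : ι × (Fin n → ι) => f 0 x.1 * ∏ i, f i.succ (x.2 i) := by
      apply (hs 0).mul_of_nonneg htail
      · exact hf 0
      · exact fun q => Finset.prod_nonneg fun i _ => hf i.succ (q i)
    refine (hhead_tail.comp_injective (Fin.consEquiv fun _ => ι).symm.injective).congr fun p => ?_
    simp [Fin.consEquiv, Fin.prod_univ_succ, Fin.tail]

theorem Psigma.pos {r : ℕ} {β : Fin r → ℕ} {m : ℕ} (hm : m ∈ Psigma β) : 0 < m := by
  obtain ⟨p, hp, rfl⟩ := hm
  exact Finset.prod_pos fun i _ => pow_pos (hp i).pos _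

theorem summable_Psigma_rpow_neg {r : ℕ} (β : Fin r → ℕ) {s : ℝ} (hs : ∀ i, 1 < β i * s) :
    Summable fun m : Psigma β => ((m : ℕ) : ℝ) ^ (-s) := by
  let e : (Fin r → Nat.Primes) → Psigma β := fun p =>
    ⟨∏ i, (p i : ℕ) ^ β i, fun i => p i, fun i => (p i).2, rfl⟩
  have he : e.Surjective := by
    rintro ⟨m, p, hp, rfl⟩
    exact ⟨fun i => ⟨p i, hp i⟩, rfl⟩
  have he_rpow (p : Fin r → Nat.Primes) :
      ((e p : ℕ) : ℝ) ^ (-s) = ∏ i, ((p i : ℕ) : ℝ) ^ (-(β i * s)) := by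
    push_cast [e]
    rw [← Real.finsetProd_rpow _ _ fun i _ => by positivity]
    refine Finset.prod_congr rfl fun i _ => ?_
    rw [← Real.rpow_natCast, ← Real.rpow_mul (by positivity), mul_neg]
  have hprod := summable_fin_pi_prod (fun i (q : Nat.Primes) => ((q : ℕ) : ℝ) ^ (-(β i * s)))
    (fun _ _ => by positivity) fun i => Nat.Primes.summable_rpow.mpr (by linarith [hs i])
  refine (hprod.comp_injective (Function.injective_surjInv he)).congr fun m => ?_
  rw [Function.comp_apply, ← he_rpow, Function.surjInv_eq he]

theorem rpow_neg_le_rpow_neg_div_pow {x L a : ℝ} {C : ℕ} (k : ℕ) (hL : 0 < L) (hC : C ≠ 0)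
    (hx : L ^ C < x) : x ^ (-a) ≤ x ^ (-(a - k / C)) / L ^ k := by
  have hLC : 0 < L ^ C := by positivity
  have hx0 : 0 < x := hLC.trans hx
  have hsplit : x ^ (-a) = x ^ (-(a - k / C)) * x ^ (-(k / C : ℝ)) := by
    rw [← Real.rpow_add hx0]; ring_nf
  have hL_pow : (L ^ C) ^ (-(k / C : ℝ)) = 1 / L ^ k := by
    have hexp : (C : ℝ) * -(k / C : ℝ) = -(k : ℝ) := by field_simp
    rw [← Real.rpow_natCast L C, ← Real.rpow_mul hL.le, hexp, Real.rpow_neg hL.le,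
      Real.rpow_natCast, one_div]
  rw [hsplit, div_eq_mul_one_div _ (L ^ k), ← hL_pow]
  exact mul_le_mul_of_nonneg_left
    (Real.rpow_le_rpow_of_nonpos hLC hx.le (neg_nonpos.mpr (by positivity))) (by positivity)

theorem isBigO_tsum_tail_rpow_neg {ι : Type*} (u : ι → ℝ) (hu : ∀ i, 0 < u i) {a : ℝ} {C : ℕ}
    (k : ℕ) (hC : C ≠ 0) (hsum : Summable fun i => u i ^ (-(a - k / C))) :
    (fun x : ℝ => ∑' i, if Real.log x ^ C < u i then u i ^ (-a) else 0)
      =O[atTop] (fun x : ℝ => 1 / Real.log x ^ k) := by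
  refine IsBigO.of_bound (∑' i, u i ^ (-(a - k / C))) ?_
  filter_upwards [eventually_gt_atTop 1] with x hx
  have hL : 0 < Real.log x := Real.log_pos hx
  have hterm_nonneg (i : ι) : 0 ≤ if Real.log x ^ C < u i then u i ^ (-a) else 0 := by
    split_ifs <;> positivity [hu i]
  have hterm_le (i : ι) : (if Real.log x ^ C < u i then u i ^ (-a) else 0)
      ≤ u i ^ (-(a - k / C)) / Real.log x ^ k := by
    split_ifs with hi
    · exact rpow_neg_le_rpow_neg_div_pow k hL hC hi
    · have := hu i; positivity
  have hsum' := hsum.div_const (Real.log x ^ k)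
  rw [Real.norm_of_nonneg (tsum_nonneg hterm_nonneg), Real.norm_of_nonneg (by positivity),
    ← div_eq_mul_one_div, ← tsum_div_const]
  exact (hsum'.of_nonneg_of_le hterm_nonneg hterm_le).tsum_le_tsum hterm_le hsum'

theorem one_lt_mul_inv_sub_two_div {α b b₀ : ℕ} (hα : 0 < α) (hb : α < b) (hb₀ : α < b₀) :
    1 < (b : ℝ) * (1 / α - 2 / (2 * α * b₀ + 1 : ℕ)) := by
  have hb' : (α : ℝ) + 1 ≤ b := by exact_mod_cast hb
  have hb₀' : (α : ℝ) + 1 ≤ b₀ := by exact_mod_cast hb₀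
  push_cast
  rw [div_sub_div _ _ (by positivity) (by positivity), mul_div_assoc', lt_div_iff₀ (by positivity)]
  have hgap : 0 ≤ 2 * (α : ℝ) * b₀ - 2 * α := by nlinarith
  nlinarith [mul_nonneg (sub_nonneg.mpr hb') hgap,
    mul_nonneg (by positivity : (0 : ℝ) ≤ α) (sub_nonneg.mpr hb₀')]

open scoped Classical in
theorem tail_bound_general (r α : ℕ) (β : Fin (r + 1) → ℕ) (hα : 0 < α)
    (h : ∀ i, α < β i) :
    (fun x : ℝ =>
        ∑' m : Psigma β,
          if Real.log x ^ (2 * α * β 0 + 1 : ℕ) < ((m : ℕ) : ℝ) then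
            ((m : ℕ) : ℝ) ^ (-(1 : ℝ) / (α : ℝ))
          else 0)
      =O[atTop] (fun x : ℝ => 1 / Real.log x ^ 2) := by
  have hsum := summable_Psigma_rpow_neg β fun i => one_lt_mul_inv_sub_two_div hα (h i) (h 0)
  have htail := isBigO_tsum_tail_rpow_neg (fun m : Psigma β => ((m : ℕ) : ℝ))
    (fun m => Nat.cast_pos.mpr (Psigma.pos m.2)) 2 (Nat.succ_ne_zero _) (a := 1 / α)
    (by simpa only [Nat.cast_ofNat] using hsum)
  simpa only [neg_div] using htail

open scoped Classical in
/-- with `C = 2αα₁ + 1`, the tail `∑_{m > (log x)^C, m ∈ 𝒫_β^σ} m^{-1/α}`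
is `O(1/(log x)²)`. -/
theorem tail_bound (r α : ℕ) (β : Fin (r + 1) → ℕ) (hα : 0 < α)
    (hmono : Monotone β) (h : ∀ i, α < β i) :
    (fun x : ℝ =>
        ∑' m : Psigma β,
          if Real.log x ^ (2 * α * β 0 + 1 : ℕ) < ((m : ℕ) : ℝ) then
            ((m : ℕ) : ℝ) ^ (-(1 : ℝ) / (α : ℝ))
          else 0)
      =O[atTop] (fun x : ℝ => 1 / Real.log x ^ 2) :=
  tail_bound_general r α β hα h
end

section
/- Let α < α₁ ≤ ⋯ ≤ α_r be positive integers such that whenever ∑_i ε_i α_i = 0 with each ε_i ∈ {−1,0,1}, all ε_i = 0. Then ∑_{n ∈ 𝒫_β^σ} n^{-1/α} = ∏_{i=1}^r P(α_i/α), where β = (α₁,…,α_r). -/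
open Filter Asymptotics Real

/-! Writing `n = ∏ pᵢ^{βᵢ}`, the exponent of a prime `ℓ` in `n` is `∑_{pᵢ = ℓ} βᵢ`, and the
independence hypothesis on `β` makes this determine the tuple `(pᵢ)`. Hence the sum over `𝒫_β^σ`
is a sum over all `r`-tuples of primes, of the product `∏ pᵢ^{-βᵢ/α}`; since `βᵢ/α > 1`, each
prime series `∑_p p^{-βᵢ/α}` converges absolutely and the sum factors into their product. -/

section PiProd

variable {κ R : Type*} [NormedCommRing R]

theorem summable_norm_pi_prod : ∀ {n : ℕ} (f : Fin n → κ → R),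
    (∀ i, Summable fun k ↦ ‖f i k‖) → Summable fun g : Fin n → κ ↦ ‖∏ i, f i (g i)‖
  | 0, _, _ => .of_finite
  | n + 1, f, hf => by
    rw [← (Fin.consEquiv fun _ ↦ κ).summable_iff]
    refine .of_nonneg_of_le (fun _ ↦ norm_nonneg _) (fun z ↦ ?_)
      ((hf 0).mul_of_nonneg (summable_norm_pi_prod (fun i ↦ f i.succ) fun i ↦ hf i.succ)
        (fun _ ↦ norm_nonneg _) fun _ ↦ norm_nonneg _)
    simpa [Fin.prod_univ_succ, Fin.consEquiv] using norm_mul_le _ _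

theorem tsum_pi_prod_eq_prod_tsum [CompleteSpace R] : ∀ {n : ℕ} (f : Fin n → κ → R),
    (∀ i, Summable fun k ↦ ‖f i k‖) → ∑' g : Fin n → κ, ∏ i, f i (g i) = ∏ i, ∑' k, f i k
  | 0, _, _ => by simp
  | n + 1, f, hf => by
    rw [← (Fin.consEquiv fun _ ↦ κ).tsum_eq, Fin.prod_univ_succ,
      ← tsum_pi_prod_eq_prod_tsum (fun i ↦ f i.succ) fun i ↦ hf i.succ,
      tsum_mul_tsum_of_summable_norm (hf 0) (summable_norm_pi_prod _ fun i ↦ hf i.succ)]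
    simp [Fin.prod_univ_succ, Fin.consEquiv]

end PiProd

section PrimePowProd

variable {ι : Type*} [Fintype ι]

theorem Nat.factorization_prod_primes_pow (p : ι → {p : ℕ // p.Prime}) (β : ι → ℕ) (ℓ : ℕ) :
    (∏ i, (p i : ℕ) ^ β i).factorization ℓ = ∑ i, if (p i : ℕ) = ℓ then β i else 0 := by
  rw [Nat.factorization_prod fun i _ ↦ pow_ne_zero _ (p i).2.ne_zero, Finsupp.finsetSum_apply]
  refine Finset.sum_congr rfl fun i _ ↦ ?_
  simp [(p i).2.factorization, Finsupp.single_apply]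

/-- Both products have exponent `∑_{p i = ℓ} β i = ∑_{q i = ℓ} β i` at `ℓ = p i₀`, so the
difference of the indicator vectors of `ℓ` is a vanishing `{-1, 0, 1}`-combination of the `β i`. -/
theorem injective_prod_primes_pow {β : ι → ℕ}
    (hβ : ∀ ε : ι → ℤ, (∀ i, ε i = -1 ∨ ε i = 0 ∨ ε i = 1) → ∑ i, ε i * (β i : ℤ) = 0 →
      ∀ i, ε i = 0) :
    Function.Injective fun p : ι → {p : ℕ // p.Prime} ↦ ∏ i, (p i : ℕ) ^ β i := by
  classical
  intro p q hpq
  funext i₀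
  set ℓ : ℕ := (p i₀ : ℕ)
  set ε : ι → ℤ := fun i ↦ (if (p i : ℕ) = ℓ then 1 else 0) - (if (q i : ℕ) = ℓ then 1 else 0)
  have hε : ∀ i, ε i = -1 ∨ ε i = 0 ∨ ε i = 1 := fun i ↦ by
    simp only [ε]; split_ifs <;> simp
  have hsum : ∑ i, ε i * (β i : ℤ) = 0 := by
    have hfac := congrArg (fun n : ℕ ↦ (n.factorization ℓ : ℤ)) hpq
    simp only [Nat.factorization_prod_primes_pow, Nat.cast_sum, Nat.cast_ite,
      Nat.cast_zero] at hfac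
    simp only [ε, sub_mul, Finset.sum_sub_distrib, ite_mul, one_mul, zero_mul, hfac, sub_self]
  have hεi₀ := hβ ε hε hsum i₀
  simp only [ε, ℓ, if_true] at hεi₀
  split_ifs at hεi₀ with hq
  · exact Subtype.ext hq.symm
  · simp at hεi₀

end PrimePowProd

theorem Psigma_eq_range {r : ℕ} (β : Fin r → ℕ) :
    Psigma β = Set.range fun p : Fin r → {p : ℕ // p.Prime} ↦ ∏ i, (p i : ℕ) ^ β i := by
  ext n
  constructor
  · rintro ⟨p, hp, rfl⟩
    exact ⟨fun i ↦ ⟨p i, hp i⟩, rfl⟩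
  · rintro ⟨p, rfl⟩
    exact ⟨fun i ↦ p i, fun i ↦ (p i).2, rfl⟩

theorem Real.prod_pow_rpow {ι : Type*} (s : Finset ι) {x : ι → ℝ} (hx : ∀ i ∈ s, 0 ≤ x i)
    (k : ι → ℕ) (t : ℝ) : (∏ i ∈ s, x i ^ k i) ^ t = ∏ i ∈ s, x i ^ (k i * t) := by
  rw [← Real.finsetProd_rpow _ _ fun i hi ↦ pow_nonneg (hx i hi) _]
  refine Finset.prod_congr rfl fun i hi ↦ ?_
  rw [← Real.rpow_natCast, ← Real.rpow_mul (hx i hi)]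

theorem constant_factor_general (r α : ℕ) (hα : 0 < α) (β : Fin r → ℕ)
    (h : ∀ i, α < β i)
    (hind : ∀ ε : Fin r → ℤ, (∀ i, ε i = -1 ∨ ε i = 0 ∨ ε i = 1) →
      (∑ i, ε i * (β i : ℤ)) = 0 → ∀ i, ε i = 0) :
    (∑' n : Psigma β, ((n : ℕ) : ℝ) ^ (-(1 : ℝ) / (α : ℝ))) =
      ∏ i : Fin r,
        ∑' p : {p : ℕ // p.Prime}, ((p : ℕ) : ℝ) ^ (-((β i : ℝ) / (α : ℝ))) := by
  have hsummable : ∀ i,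
      Summable fun p : {p : ℕ // p.Prime} ↦ ‖((p : ℕ) : ℝ) ^ (-((β i : ℝ) / α))‖ := by
    intro i
    have hβα : 1 < (β i : ℝ) / α := by
      rw [one_lt_div (by positivity)]
      exact_mod_cast h i
    exact (Nat.Primes.summable_rpow.mpr (by linarith)).abs
  calc ∑' n : Psigma β, ((n : ℕ) : ℝ) ^ (-(1 : ℝ) / α)
      = ∑' p : Fin r → {p : ℕ // p.Prime}, ∏ i, ((p i : ℕ) : ℝ) ^ (-((β i : ℝ) / α)) := by
        rw [Psigma_eq_range, tsum_range (fun n : ℕ ↦ (n : ℝ) ^ (-(1 : ℝ) / α))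
          (injective_prod_primes_pow hind)]
        refine tsum_congr fun p ↦ ?_
        push_cast
        rw [Real.prod_pow_rpow _ fun i _ ↦ Nat.cast_nonneg _]
        congr! 2 with i
        ring
    _ = _ := tsum_pi_prod_eq_prod_tsum _ hsummable

/-- if no nontrivial `{-1,0,1}`-combination of the `αᵢ` vanishes, then
`∑_{n ∈ 𝒫_β^σ} n^{-1/α} = ∏ᵢ P(αᵢ/α)`. -/
theorem constant_factor (r α : ℕ) (hα : 0 < α) (β : Fin r → ℕ)
    (hmono : Monotone β) (h : ∀ i, α < β i)
    (hind : ∀ ε : Fin r → ℤ, (∀ i, ε i = -1 ∨ ε i = 0 ∨ ε i = 1) →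
      (∑ i, ε i * (β i : ℤ)) = 0 → ∀ i, ε i = 0) :
    (∑' n : Psigma β, ((n : ℕ) : ℝ) ^ (-(1 : ℝ) / (α : ℝ))) =
      ∏ i : Fin r,
        ∑' p : {p : ℕ // p.Prime}, ((p : ℕ) : ℝ) ^ (-((β i : ℝ) / (α : ℝ))) :=
  constant_factor_general r α hα β h hind
end
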